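/- arXiv:1703.04773 — 4 statements merged into one kernel-verified Lean document; each statement's English description precedes it below -/
import Mathlib

section
/- The map P defined on entire functions by P(f)(z) = f(0)·f(z+1) is topologically mixing on H(ℂ): for all entire functions f, g and all ε > 0, R > 0, there exists N ∈ ℕ such that for every n ≥ N there is an entire function h with sup_{|z| ≤ R} |h(z) − f(z)| < ε and sup_{|z| ≤ R} |P^n(h)(z) − g(z)| < ε. -/
/-!
Since `P^[n] h z = c_n(h) · h (z + n)`, where `c_n(h) = ∏_{k < n} h(k)^(2^(n-1-k))` only depends
on the values of `h` at `0, …, n - 1`, it suffices to find an entire `h` that is close to `f` on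
`|z| ≤ R`, close to `λ · g (· - n)` on `|z - n| ≤ R`, and equal to `1` at the integers between the
two discs, with `λ` chosen so that `λ · c_n(h) ≈ 1`. The ideal value of `c_n(h)` is homogeneous
of some degree `E` in `λ`, so `λ` is an `(E+1)`-st root; this needs that the (slightly shifted)
`f` and `g` do not vanish at the relevant integers.

Such an `h` is `1 + (f - 1) Φ + (λ g(· - n) - 1) Ψ`, where `Φ, Ψ` vanish at the middle integers
and approximate the indicators of the two discs. They are products of `∏ₖ (1 - (z / k)^J)` and
iterates of the smoothstep polynomial `3x² - 2x³`, whose superattracting fixed points `0` and `1`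
separate the two discs.
-/

open Filter Topology

/-- The polynomial map `P(f)(z) = f(0) · f(z+1)` on functions `ℂ → ℂ`. -/
noncomputable def P (f : ℂ → ℂ) : ℂ → ℂ := fun z => f 0 * f (z + 1)

noncomputable def iterCoeff (h : ℂ → ℂ) : ℕ → ℂ
  | 0 => 1
  | n + 1 => iterCoeff h n ^ 2 * h n

theorem P_iterate_apply (h : ℂ → ℂ) (n : ℕ) (z : ℂ) :
    P^[n] h z = iterCoeff h n * h (z + n) := by
  induction n generalizing z with
  | zero => simp [iterCoeff]
  | succ n ih =>
    rw [Function.iterate_succ_apply', P, ih, ih, iterCoeff, zero_add, add_assoc]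
    push_cast
    ring_nf

theorem iterCoeff_ne_zero {t : ℂ → ℂ} {n : ℕ} (ht : ∀ k < n, t k ≠ 0) : iterCoeff t n ≠ 0 := by
  induction n with
  | zero => exact one_ne_zero
  | succ n ih =>
    exact mul_ne_zero (pow_ne_zero _ (ih fun k hk => ht k (by omega))) (ht n n.lt_succ_self)

theorem exists_iterCoeff_eq_pow_mul {s : ℂ → ℂ → ℂ} {t : ℂ → ℂ} (d : ℂ → ℕ)
    (hs : ∀ c z, s c z = c ^ d z * t z) (n : ℕ) :
    ∃ E : ℕ, ∀ c, iterCoeff (s c) n = c ^ E * iterCoeff t n := by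
  induction n with
  | zero => exact ⟨0, by simp [iterCoeff]⟩
  | succ n ih =>
    obtain ⟨E, hE⟩ := ih
    exact ⟨2 * E + d n, fun c => by simp only [iterCoeff, hE, hs]; ring⟩

theorem tendsto_iterCoeff {α : Type*} {l : Filter α} {H : α → ℂ → ℂ} {t : ℂ → ℂ} {n : ℕ}
    (hH : ∀ k < n, Tendsto (fun a => H a k) l (𝓝 (t k))) :
    Tendsto (fun a => iterCoeff (H a) n) l (𝓝 (iterCoeff t n)) := by
  induction n with
  | zero => exact tendsto_const_nhds
  | succ n ih =>
    exact ((ih fun k hk => hH k (by omega)).pow 2).mul (hH n n.lt_succ_self)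

def smoothstep (x : ℂ) : ℂ := x ^ 2 * (3 - 2 * x)

theorem smoothstep_iterate_one_sub (K : ℕ) (x : ℂ) :
    smoothstep^[K] (1 - x) = 1 - smoothstep^[K] x := by
  induction K generalizing x with
  | zero => rfl
  | succ K ih =>
    rw [Function.iterate_succ_apply, Function.iterate_succ_apply, ← ih]
    congr 1
    simp only [smoothstep]; ring

theorem differentiable_smoothstep_iterate (K : ℕ) : Differentiable ℂ smoothstep^[K] := by
  induction K with
  | zero => exact differentiable_id
  | succ K ih => exact ih.comp (by unfold smoothstep; fun_prop)

theorem norm_smoothstep_le {x : ℂ} (hx : ‖x‖ ≤ 1 / 8) : ‖smoothstep x‖ ≤ ‖x‖ / 2 := by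
  have h3 : ‖3 - 2 * x‖ ≤ 4 := by
    calc ‖3 - 2 * x‖ ≤ ‖(3 : ℂ)‖ + ‖2 * x‖ := norm_sub_le _ _
      _ ≤ 4 := by rw [norm_mul]; norm_num; linarith
  rw [smoothstep, norm_mul, norm_pow]
  nlinarith [norm_nonneg x, norm_nonneg (3 - 2 * x)]

theorem norm_smoothstep_iterate_le (K : ℕ) {x : ℂ} (hx : ‖x‖ ≤ 1 / 8) :
    ‖smoothstep^[K] x‖ ≤ (1 / 2) ^ K * ‖x‖ := by
  induction K generalizing x with
  | zero => simp
  | succ K ih =>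
    have hx' := norm_smoothstep_le hx
    rw [Function.iterate_succ_apply, pow_succ]
    calc ‖smoothstep^[K] (smoothstep x)‖ ≤ (1 / 2) ^ K * ‖smoothstep x‖ :=
          ih (by linarith [norm_nonneg x])
      _ ≤ (1 / 2) ^ K * (1 / 2) * ‖x‖ := by
          rw [mul_assoc]; gcongr; linarith

theorem exists_entire_cutoff {c : ℂ} (hc : c ≠ 0) {r : ℝ} (hr : 8 * r ≤ ‖c‖) {η : ℝ}
    (hη : 0 < η) :
    ∃ χ : ℂ → ℂ, Differentiable ℂ χ ∧ (∀ z, ‖z‖ ≤ r → ‖χ z - 1‖ ≤ η) ∧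
      ∀ z, ‖z - c‖ ≤ r → ‖χ z‖ ≤ η := by
  obtain ⟨K, hK⟩ := exists_pow_lt_of_lt_one hη (by norm_num : (1 / 2 : ℝ) < 1)
  have hsmall : ∀ x : ℂ, ‖x‖ ≤ 1 / 8 → ‖smoothstep^[K] x‖ ≤ η := fun x hx =>
    (norm_smoothstep_iterate_le K hx).trans
      (by nlinarith [pow_pos (by norm_num : (0 : ℝ) < 1 / 2) K])
  have hdiv : ∀ w, ‖w‖ ≤ r → ‖w / c‖ ≤ 1 / 8 := fun w hw => by
    rw [norm_div, div_le_iff₀ (norm_pos_iff.2 hc)]; linarith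
  refine ⟨fun z => smoothstep^[K] (1 - z / c),
    (differentiable_smoothstep_iterate K).comp (by fun_prop), fun z hz => ?_, fun z hz => ?_⟩
  · dsimp only
    rw [smoothstep_iterate_one_sub, sub_sub_cancel_left, norm_neg]
    exact hsmall _ (hdiv z hz)
  · have : 1 - z / c = -(z - c) / c := by field_simp; ring
    exact hsmall _ (this ▸ hdiv _ (by rwa [norm_neg]))

theorem exists_pos_norm_le_on_two_balls {E : Type*} [NormedAddCommGroup E] {F : ℂ → E}
    (hF : Continuous F) (r : ℝ) (c : ℂ) :
    ∃ M > 0, (∀ z, ‖z‖ ≤ r → ‖F z‖ ≤ M) ∧ ∀ z, ‖z - c‖ ≤ r → ‖F z‖ ≤ M := by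
  obtain ⟨M, hM0, hM⟩ := (((isCompact_closedBall 0 r).union (isCompact_closedBall c r)).image
    hF).isBounded.exists_pos_norm_le
  refine ⟨M, hM0, fun z hz => hM _ ⟨z, Or.inl ?_, rfl⟩, fun z hz => hM _ ⟨z, Or.inr ?_, rfl⟩⟩
  · rwa [mem_closedBall_zero_iff]
  · rwa [Metric.mem_closedBall, dist_eq_norm]

theorem exists_entire_vanishing_near_one {r : ℝ} (hr : 0 ≤ r) {S : Finset ℂ}
    (hS : ∀ s ∈ S, r < ‖s‖) {η : ℝ} (hη : 0 < η) :
    ∃ F : ℂ → ℂ, Differentiable ℂ F ∧ (∀ s ∈ S, F s = 0) ∧ ∀ z, ‖z‖ ≤ r → ‖F z - 1‖ ≤ η := by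
  have hsum : Tendsto (fun J : ℕ => ∑ s ∈ S, (r / ‖s‖) ^ J) atTop (𝓝 0) := by
    simpa using tendsto_finsetSum S fun s hs => tendsto_pow_atTop_nhds_zero_of_lt_one
      (by positivity) ((div_lt_one (hr.trans_lt (hS s hs))).2 (hS s hs))
  have hlim : Tendsto (fun J : ℕ => Real.exp (∑ s ∈ S, (r / ‖s‖) ^ J) - 1) atTop (𝓝 0) := by
    simpa using ((Real.continuous_exp.tendsto 0).comp hsum).sub_const 1
  obtain ⟨J, hJ⟩ := (hlim.eventually (ge_mem_nhds hη)).exists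
  refine ⟨fun z => ∏ s ∈ S, (1 + -(z / s) ^ J), by fun_prop, fun s hs => ?_, fun z hz => ?_⟩
  · have hs0 : s ≠ 0 := norm_pos_iff.1 (hr.trans_lt (hS s hs))
    exact Finset.prod_eq_zero hs (by rw [div_self hs0, one_pow]; ring)
  · refine (S.norm_prod_one_add_sub_one_le _).trans (le_trans ?_ hJ)
    gcongr with s hs
    rw [norm_neg, norm_pow, norm_div]
    gcongr

theorem exists_entire_cutoff_vanishing {c : ℂ} (hc : c ≠ 0) {r : ℝ} (hr : 0 ≤ r)
    (hrc : 8 * r ≤ ‖c‖) {S : Finset ℂ} (hS : ∀ s ∈ S, r < ‖s‖) {θ : ℝ} (hθ : 0 < θ) :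
    ∃ Φ : ℂ → ℂ, Differentiable ℂ Φ ∧ (∀ s ∈ S, Φ s = 0) ∧ (∀ z, ‖z‖ ≤ r → ‖Φ z - 1‖ ≤ θ) ∧
      ∀ z, ‖z - c‖ ≤ r → ‖Φ z‖ ≤ θ := by
  obtain ⟨F, hFd, hF0, hF1⟩ := exists_entire_vanishing_near_one hr hS (half_pos hθ)
  obtain ⟨M, hM0, hM, hM'⟩ := exists_pos_norm_le_on_two_balls hFd.continuous r c
  obtain ⟨χ, hχd, hχ1, hχ0⟩ := exists_entire_cutoff hc hrc (by positivity : 0 < θ / (2 * M))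
  have hMθ : M * (θ / (2 * M)) = θ / 2 := by field_simp
  refine ⟨fun z => F z * χ z, hFd.mul hχd, fun s hs => by simp [hF0 s hs], fun z hz => ?_,
    fun z hz => ?_⟩
  · calc ‖F z * χ z - 1‖ = ‖F z * (χ z - 1) + (F z - 1)‖ := by ring_nf
      _ ≤ M * (θ / (2 * M)) + θ / 2 := by
          refine norm_add_le_of_le ?_ (hF1 z hz)
          rw [norm_mul]; gcongr; exacts [hM z hz, hχ1 z hz]
      _ = θ := by rw [hMθ]; ring
  · calc ‖F z * χ z‖ ≤ M * (θ / (2 * M)) := by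
          rw [norm_mul]; gcongr; exacts [hM' z hz, hχ0 z hz]
      _ ≤ θ := by linarith

theorem exists_entire_approx_two_balls {u v : ℂ → ℂ} (hu : Differentiable ℂ u)
    (hv : Differentiable ℂ v) {c : ℂ} (hc : c ≠ 0) {r : ℝ} (hr : 0 ≤ r) (hrc : 8 * r ≤ ‖c‖)
    {S : Finset ℂ} (hS : ∀ s ∈ S, r < ‖s‖ ∧ r < ‖s - c‖) {θ : ℝ} (hθ : 0 < θ) :
    ∃ h : ℂ → ℂ, Differentiable ℂ h ∧ (∀ s ∈ S, h s = 1) ∧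
      (∀ z, ‖z‖ ≤ r → ‖h z - u z‖ ≤ θ) ∧ ∀ z, ‖z - c‖ ≤ r → ‖h z - v z‖ ≤ θ := by
  obtain ⟨Mu, hMu0, hMu, hMu'⟩ := exists_pos_norm_le_on_two_balls (hu.sub_const 1).continuous r c
  obtain ⟨Mv, hMv0, hMv, hMv'⟩ := exists_pos_norm_le_on_two_balls (hv.sub_const 1).continuous r c
  obtain ⟨θ', hθ'0, hθ'⟩ : ∃ θ' > 0, (Mu + Mv) * θ' = θ :=
    ⟨θ / (Mu + Mv), by positivity, by field_simp⟩
  obtain ⟨Φ, hΦd, hΦS, hΦ1, hΦ0⟩ :=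
    exists_entire_cutoff_vanishing hc hr hrc (fun s hs => (hS s hs).1) hθ'0
  -- `Ψ z := Φ' (c - z)` is the cutoff with the roles of the two balls exchanged.
  obtain ⟨Φ', hΦ'd, hΦ'S, hΦ'1, hΦ'0⟩ := exists_entire_cutoff_vanishing hc hr hrc
    (S := S.image (c - ·)) (by simpa [norm_sub_rev] using fun s hs => (hS s hs).2)
    hθ'0
  refine ⟨fun z => 1 + (u z - 1) * Φ z + (v z - 1) * Φ' (c - z),
    by fun_prop, fun s hs => ?_, fun z hz => ?_, fun z hz => ?_⟩
  · simp [hΦS s hs, hΦ'S (c - s) (Finset.mem_image_of_mem _ hs)]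
  · calc ‖1 + (u z - 1) * Φ z + (v z - 1) * Φ' (c - z) - u z‖
          = ‖(u z - 1) * (Φ z - 1) + (v z - 1) * Φ' (c - z)‖ := by ring_nf
      _ ≤ Mu * θ' + Mv * θ' := by
          refine norm_add_le_of_le ?_ ?_ <;> rw [norm_mul]
          · exact mul_le_mul (hMu z hz) (hΦ1 z hz) (norm_nonneg _) hMu0.le
          · exact mul_le_mul (hMv z hz) (hΦ'0 _ (by simpa using hz)) (norm_nonneg _) hMv0.le
      _ = θ := by rw [← hθ']; ring
  · calc ‖1 + (u z - 1) * Φ z + (v z - 1) * Φ' (c - z) - v z‖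
          = ‖(u z - 1) * Φ z + (v z - 1) * (Φ' (c - z) - 1)‖ := by ring_nf
      _ ≤ Mu * θ' + Mv * θ' := by
          refine norm_add_le_of_le ?_ ?_ <;> rw [norm_mul]
          · exact mul_le_mul (hMu' z hz) (hΦ0 z hz) (norm_nonneg _) hMu0.le
          · exact mul_le_mul (hMv' z hz) (hΦ'1 _ (by rwa [norm_sub_rev])) (norm_nonneg _)
              hMv0.le
      _ = θ := by rw [← hθ']; ring

noncomputable def twoBallProfile (r : ℝ) (c : ℂ) (u v : ℂ → ℂ) (z : ℂ) : ℂ :=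
  if ‖z - c‖ ≤ r then v z else if ‖z‖ ≤ r then u z else 1

theorem exists_entire_approx_twoBallProfile {u v : ℂ → ℂ} (hu : Differentiable ℂ u)
    (hv : Differentiable ℂ v) {r : ℝ} (hr : 0 ≤ r) {n : ℕ} (hn : 0 < n) (hrn : 8 * r ≤ n)
    {θ : ℝ} (hθ : 0 < θ) :
    ∃ h : ℂ → ℂ, Differentiable ℂ h ∧ (∀ k < n, ‖h k - twoBallProfile r n u v k‖ ≤ θ) ∧
      (∀ z, ‖z‖ ≤ r → ‖h z - u z‖ ≤ θ) ∧ ∀ z, ‖z - (n : ℂ)‖ ≤ r → ‖h z - v z‖ ≤ θ := by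
  set S : Finset ℂ :=
    ((Finset.range n).image (Nat.cast : ℕ → ℂ)).filter fun s => r < ‖s‖ ∧ r < ‖s - n‖
  obtain ⟨h, hhd, hhS, hhu, hhv⟩ := exists_entire_approx_two_balls hu hv
    (Nat.cast_ne_zero.2 hn.ne') hr (by simpa using hrn) (S := S)
    (fun s hs => (Finset.mem_filter.1 hs).2) hθ
  refine ⟨h, hhd, fun k hk => ?_, hhu, hhv⟩
  simp only [twoBallProfile]
  split_ifs with hfar hnear
  · exact hhv k hfar
  · exact hhu k hnear
  · have hkS : (k : ℂ) ∈ S := Finset.mem_filter.2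
      ⟨Finset.mem_image_of_mem _ (Finset.mem_range.2 hk), not_le.1 hnear, not_le.1 hfar⟩
    rw [hhS k hkS, sub_self, norm_zero]
    exact hθ.le

theorem exists_entire_approx_P_iterate {u v : ℂ → ℂ} (hu : Differentiable ℂ u)
    (hv : Differentiable ℂ v) {r : ℝ} (hr : 0 ≤ r) {n : ℕ} (hn : 0 < n) (hrn : 8 * r ≤ n)
    {η : ℝ} (hη : 0 < η) :
    ∃ h : ℂ → ℂ, Differentiable ℂ h ∧ (∀ z, ‖z‖ ≤ r → ‖h z - u z‖ ≤ η) ∧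
      ∀ z, ‖z‖ ≤ r → ‖P^[n] h z - iterCoeff (twoBallProfile r n u v) n * v (z + n)‖ ≤ η := by
  set t := twoBallProfile r n u v
  choose! H hHd hHt hHu hHv using fun θ (hθ : 0 < θ) =>
    exists_entire_approx_twoBallProfile hu hv hr hn hrn hθ
  have hθ0 : Tendsto (fun θ : ℝ => θ) (𝓝[>] 0) (𝓝 0) := tendsto_id.mono_left nhdsWithin_le_nhds
  have hcoeff : Tendsto (fun θ => iterCoeff (H θ) n) (𝓝[>] 0) (𝓝 (iterCoeff t n)) :=
    tendsto_iterCoeff fun k hk => tendsto_iff_norm_sub_tendsto_zero.2 <|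
      squeeze_zero' (Eventually.of_forall fun _ => norm_nonneg _)
        (eventually_nhdsWithin_of_forall fun θ hθ => hHt θ hθ k hk) hθ0
  obtain ⟨M, -, -, hM⟩ := exists_pos_norm_le_on_two_balls hv.continuous r n
  have herr : Tendsto (fun θ => ‖iterCoeff (H θ) n - iterCoeff t n‖ * (M + θ) +
      ‖iterCoeff t n‖ * θ) (𝓝[>] 0) (𝓝 0) := by
    simpa using ((hcoeff.sub_const (iterCoeff t n)).norm.mul
      ((tendsto_const_nhds (x := M)).add hθ0)).add
      ((tendsto_const_nhds (x := ‖iterCoeff t n‖)).mul hθ0)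
  have hpos : ∀ᶠ θ in 𝓝[>] (0 : ℝ), 0 < θ := self_mem_nhdsWithin
  obtain ⟨θ, hθ, hθη, herrη⟩ := (hpos.and
    ((hθ0.eventually (ge_mem_nhds hη)).and (herr.eventually (ge_mem_nhds hη)))).exists
  refine ⟨H θ, hHd θ hθ, fun z hz => (hHu θ hθ z hz).trans hθη, fun z hz => ?_⟩
  have hw : ‖z + n - n‖ ≤ r := by rwa [add_sub_cancel_right]
  have hHw : ‖H θ (z + n)‖ ≤ M + θ := by
    calc ‖H θ (z + n)‖ = ‖v (z + n) + (H θ (z + n) - v (z + n))‖ := by ring_nf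
      _ ≤ M + θ := norm_add_le_of_le (hM _ hw) (hHv θ hθ _ hw)
  rw [P_iterate_apply]
  calc ‖iterCoeff (H θ) n * H θ (z + n) - iterCoeff t n * v (z + n)‖
      = ‖(iterCoeff (H θ) n - iterCoeff t n) * H θ (z + n) +
          iterCoeff t n * (H θ (z + n) - v (z + n))‖ := by ring_nf
    _ ≤ ‖iterCoeff (H θ) n - iterCoeff t n‖ * (M + θ) + ‖iterCoeff t n‖ * θ := by
        refine norm_add_le_of_le ?_ ?_ <;> rw [norm_mul] <;> gcongr
        exact hHv θ hθ _ hw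
    _ ≤ η := herrη

theorem exists_twoBallProfile_mul_iterCoeff_eq_one {r : ℝ} {ζ : ℂ} {u w : ℂ → ℂ} {n : ℕ}
    (hu : ∀ k < n, ‖(k : ℂ)‖ ≤ r → u k ≠ 0) (hw : ∀ k < n, ‖(k : ℂ) - ζ‖ ≤ r → w k ≠ 0) :
    ∃ c : ℂ, iterCoeff (twoBallProfile r ζ u fun z => c * w z) n * c = 1 := by
  obtain ⟨E, hE⟩ := exists_iterCoeff_eq_pow_mul
    (s := fun c => twoBallProfile r ζ u fun z => c * w z) (t := twoBallProfile r ζ u w)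
    (fun z => if ‖z - ζ‖ ≤ r then 1 else 0)
    (fun c z => by unfold twoBallProfile; split_ifs <;> simp) n
  have hne : iterCoeff (twoBallProfile r ζ u w) n ≠ 0 := iterCoeff_ne_zero fun k hk => by
    unfold twoBallProfile
    split_ifs with hfar hnear
    exacts [hw k hk hfar, hu k hk hnear, one_ne_zero]
  obtain ⟨c, hc⟩ := IsAlgClosed.exists_pow_nat_eq (iterCoeff (twoBallProfile r ζ u w) n)⁻¹
    E.succ_pos
  exact ⟨c, by rw [hE, mul_right_comm, ← pow_succ, hc, inv_mul_cancel₀ hne]⟩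

theorem exists_norm_lt_forall_add_ne_zero {α : Type*} (f : α → ℂ) {T : Set α} (hT : T.Finite)
    {ε : ℝ} (hε : 0 < ε) : ∃ a : ℂ, ‖a‖ < ε ∧ ∀ x ∈ T, f x + a ≠ 0 := by
  obtain ⟨a, ha, hbad⟩ := ((infinite_of_mem_nhds (0 : ℂ) (Metric.ball_mem_nhds 0 hε)).sdiff
    (hT.image fun x => -f x)).nonempty
  refine ⟨a, mem_ball_zero_iff.1 ha, fun x hx h0 => hbad ⟨x, hx, ?_⟩⟩
  linear_combination -h0

/-- `P` is topologically mixing on the space of entire functions. -/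
theorem P_mixing :
    ∀ f g : ℂ → ℂ, Differentiable ℂ f → Differentiable ℂ g →
    ∀ ε > (0 : ℝ), ∀ R > (0 : ℝ), ∃ N : ℕ, ∀ n ≥ N,
      ∃ h : ℂ → ℂ, Differentiable ℂ h ∧
        (∀ z : ℂ, ‖z‖ ≤ R → ‖h z - f z‖ < ε) ∧
        (∀ z : ℂ, ‖z‖ ≤ R → ‖(P^[n] h) z - g z‖ < ε) := by
  intro f g hf hg ε hε R hR
  have hT := (isCompact_closedBall (0 : ℤ) R).finite_of_discrete.image (Int.cast : ℤ → ℂ)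
  have hmemT : ∀ j : ℤ, ‖(j : ℂ)‖ ≤ R → (j : ℂ) ∈ Int.cast '' Metric.closedBall (0 : ℤ) R :=
    fun j hj => ⟨j, by simpa [Int.norm_eq_abs] using hj, rfl⟩
  obtain ⟨a, ha, hfa⟩ := exists_norm_lt_forall_add_ne_zero f hT (half_pos hε)
  obtain ⟨b, hb, hgb⟩ := exists_norm_lt_forall_add_ne_zero g hT (half_pos hε)
  refine ⟨⌈8 * R⌉₊ + 1, fun n hn => ?_⟩
  have hRn : 8 * R ≤ n := (Nat.le_ceil _).trans (by exact_mod_cast (Nat.le_succ _).trans hn)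
  obtain ⟨c, hc⟩ := exists_twoBallProfile_mul_iterCoeff_eq_one (r := R) (ζ := n) (n := n)
    (u := fun z => f z + a) (w := fun z => g (z - n) + b)
    (fun k _ hk => by simpa using hfa _ (hmemT k (by simpa using hk)))
    (fun k _ hk => by simpa using hgb _ (hmemT (k - n) (by push_cast; exact hk)))
  obtain ⟨h, hhd, hhf, hhg⟩ := exists_entire_approx_P_iterate (hf.add_const a)
    (((hg.comp (differentiable_id.sub_const _)).add_const b).const_mul c) hR.le
    (by omega) hRn (half_pos hε)
  refine ⟨h, hhd, fun z hz => ?_, fun z hz => ?_⟩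
  · calc ‖h z - f z‖ = ‖(h z - (f z + a)) + a‖ := by ring_nf
      _ < ε := (norm_add_le_of_le (hhf z hz) le_rfl).trans_lt (by linarith)
  · set A := iterCoeff (twoBallProfile R n (fun z => f z + a) fun z => c * (g (z - n) + b)) n
    have hgz : g z = A * (c * (g (z + n - n) + b)) - b := by
      rw [add_sub_cancel_right]; linear_combination -(g z + b) * hc
    rw [hgz, sub_sub_eq_add_sub, add_sub_right_comm]
    exact (norm_add_le_of_le (hhg z hz) le_rfl).trans_lt (by linarith)
end

section
/- Let P be the map on entire functions defined by P(f)(z) = f(0)·f(z+1), let f be an entire function, let n ≥ 1 and α ∈ ℂ be such that f(z+n) = α·f(z) for all z ∈ ℂ, and suppose β ∈ ℂ satisfies β^{2^n − 1} = 1/(c_n(f)·α) (in particular c_n(f)·α ≠ 0). Then the entire function g = β·f is an n-periodic point of P, that is, P^n(g) = g. -/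
/-- `c_n(f) = ∏_{j=0}^{n-1} f(j)^{2^{n-1-j}}`. -/
noncomputable def c (n : ℕ) (f : ℂ → ℂ) : ℂ :=
  ∏ j ∈ Finset.range n, f j ^ 2 ^ (n - 1 - j)

lemma c_succ (n : ℕ) (f : ℂ → ℂ) : c (n + 1) f = c n f ^ 2 * f n := by
  rw [c, Finset.prod_range_succ, c, ← Finset.prod_pow, show n + 1 - 1 - n = 0 by omega, pow_zero,
    pow_one]
  congr 1
  refine Finset.prod_congr rfl fun j hj => ?_
  have hexp : n + 1 - 1 - j = n - 1 - j + 1 := by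
    have := Finset.mem_range.mp hj
    omega
  rw [hexp, pow_succ, pow_mul]

lemma iterate_P_apply (f : ℂ → ℂ) (n : ℕ) (z : ℂ) : P^[n] f z = c n f * f (z + n) := by
  induction n generalizing z with
  | zero => simp [c]
  | succ n ih =>
    rw [Function.iterate_succ_apply', P, ih, ih, c_succ, zero_add,
      show z + 1 + n = z + (n + 1 : ℕ) by push_cast; ring]
    ring

lemma c_const_mul (n : ℕ) (f : ℂ → ℂ) (β : ℂ) :
    c n (fun z => β * f z) = β ^ (2 ^ n - 1) * c n f := by
  induction n with
  | zero => simp [c]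
  | succ n ih =>
    have hexp : 2 ^ (n + 1) - 1 = (2 ^ n - 1) * 2 + 1 := by
      have := Nat.one_le_two_pow (n := n)
      rw [pow_succ]
      omega
    rw [c_succ, c_succ, ih, hexp]
    ring

lemma pow_mul_mul_self_of_pow_eq_one_div {G₀ : Type*} [GroupWithZero G₀] {β x : G₀} {k : ℕ}
    (h : β ^ k = 1 / x) : β ^ k * x * β = β := by
  rcases eq_or_ne x 0 with rfl | hx
  · rw [eq_zero_of_pow_eq_zero (h.trans (div_zero 1)), mul_zero]
  · rw [h, one_div, inv_mul_cancel₀ hx, one_mul]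

theorem P_periodic_from_quasiperiodic_general
    (f : ℂ → ℂ) (n : ℕ) (α β : ℂ)
    (hqp : ∀ z : ℂ, f (z + n) = α * f z)
    (hβ : β ^ (2 ^ n - 1) = 1 / (c n f * α)) :
    P^[n] (fun z => β * f z) = fun z => β * f z := by
  funext z
  rw [iterate_P_apply, c_const_mul, hqp]
  calc β ^ (2 ^ n - 1) * c n f * (β * (α * f z))
      = β ^ (2 ^ n - 1) * (c n f * α) * β * f z := by ring
    _ = β * f z := by rw [pow_mul_mul_self_of_pow_eq_one_div hβ]

/-- If `f` is entire and quasiperiodic, `f(z+n) = α·f(z)`, and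
`β^{2^n - 1} = 1/(c_n(f)·α)`, then `β·f` is an `n`-periodic point of `P`. -/
theorem P_periodic_from_quasiperiodic
    (f : ℂ → ℂ) (hf : Differentiable ℂ f) (n : ℕ) (hn : 1 ≤ n) (α β : ℂ)
    (hqp : ∀ z : ℂ, f (z + n) = α * f z)
    (hβ : β ^ (2 ^ n - 1) = 1 / (c n f * α)) :
    P^[n] (fun z => β * f z) = fun z => β * f z :=
  P_periodic_from_quasiperiodic_general f n α β hqp hβ
end

section
/- Entire functions that are periodic with arbitrarily large integer period are dense in H(ℂ): for every entire function g, every ε > 0, R > 0, and every n₀ ∈ ℕ, there exist an integer n > n₀ and an entire function f with f(z+n) = f(z) for all z ∈ ℂ and sup_{|z| ≤ R} |f(z) − g(z)| < ε. -/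
/-!
For `c ≠ 0` the entire function `φ_c z = (exp (c z) - 1) / c` has period `2πi / c`, and
`φ_c z - z = (exp (c z) - 1 - c z) / c = O(|c| |z|²)`, so `φ_c → id` uniformly on compact sets
as `c → 0`. With `c = 2πi / n` the function `g ∘ φ_c` is `n`-periodic, entire, and uniformly
close to `g` on `|z| ≤ R` once `n` is large.
-/

open Complex Filter Topology Metric
open scoped Real

noncomputable def expMulSubOneDiv (c z : ℂ) : ℂ := (exp (c * z) - 1) / c

theorem differentiable_expMulSubOneDiv (c : ℂ) : Differentiable ℂ (expMulSubOneDiv c) :=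
  ((differentiable_const c).mul differentiable_id).cexp.sub_const 1 |>.div_const c

theorem periodic_expMulSubOneDiv (c : ℂ) :
    Function.Periodic (expMulSubOneDiv c) (c⁻¹ * (2 * π * I)) :=
  fun z => congrArg (fun w => (w - 1) / c) (exp_periodic.const_mul c z)

theorem norm_expMulSubOneDiv_sub_le {c z : ℂ} (hc : c ≠ 0) (hcz : ‖c * z‖ ≤ 1) :
    ‖expMulSubOneDiv c z - z‖ ≤ ‖c‖ * ‖z‖ ^ 2 := by
  have hsub : expMulSubOneDiv c z - z = (exp (c * z) - 1 - c * z) / c := by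
    rw [expMulSubOneDiv]
    field_simp
  calc ‖expMulSubOneDiv c z - z‖ = ‖exp (c * z) - 1 - c * z‖ / ‖c‖ := by
        rw [hsub, norm_div]
    _ ≤ ‖c * z‖ ^ 2 / ‖c‖ := by gcongr; exact norm_exp_sub_one_sub_id_le hcz
    _ = ‖c‖ * ‖z‖ ^ 2 := by rw [norm_mul]; field_simp

theorem tendstoUniformlyOn_expMulSubOneDiv (R : ℝ) :
    TendstoUniformlyOn expMulSubOneDiv id (𝓝[≠] 0) (closedBall 0 R) := by
  rw [Metric.tendstoUniformlyOn_iff]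
  intro ε hε
  have hsmall (a : ℝ) (ha : 0 < a) (C : ℝ) : ∀ᶠ c : ℂ in 𝓝[≠] 0, ‖c‖ * C < a := by
    have : Tendsto (fun c : ℂ => ‖c‖ * C) (𝓝[≠] 0) (𝓝 0) := by
      simpa using (tendsto_norm_zero.mono_left nhdsWithin_le_nhds).mul_const C
    exact this.eventually (gt_mem_nhds ha)
  filter_upwards [self_mem_nhdsWithin, hsmall 1 one_pos R, hsmall ε hε (R ^ 2)]
    with c (hc : c ≠ 0) hcR hcR2 z hz
  have hzR : ‖z‖ ≤ R := by simpa using hz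
  have hcz : ‖c * z‖ ≤ 1 := by
    rw [norm_mul]
    exact (mul_le_mul_of_nonneg_left hzR (norm_nonneg c)).trans hcR.le
  rw [dist_comm, dist_eq_norm]
  calc ‖expMulSubOneDiv c z - z‖ ≤ ‖c‖ * ‖z‖ ^ 2 := norm_expMulSubOneDiv_sub_le hc hcz
    _ ≤ ‖c‖ * R ^ 2 := by gcongr
    _ < ε := hcR2

theorem Continuous.tendstoUniformlyOn_comp_expMulSubOneDiv {E : Type*} [UniformSpace E]
    {g : ℂ → E} (hg : Continuous g) (R : ℝ) :
    TendstoUniformlyOn (fun c z => g (expMulSubOneDiv c z)) g (𝓝[≠] 0) (closedBall 0 R) := by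
  have hconv := tendstoUniformlyOn_expMulSubOneDiv R
  have hball : ∀ᶠ c in 𝓝[≠] (0 : ℂ), ∀ z ∈ closedBall 0 R,
      expMulSubOneDiv c z ∈ closedBall 0 (R + 1) := by
    filter_upwards [Metric.tendstoUniformlyOn_iff.mp hconv 1 one_pos] with c hc z hz
    have hnear : dist z (expMulSubOneDiv c z) < 1 := hc z hz
    rw [mem_closedBall] at hz ⊢
    linarith [dist_triangle_left (expMulSubOneDiv c z) 0 z]
  exact ((isCompact_closedBall 0 (R + 1)).uniformContinuousOn_of_continuous hg.continuousOn
    ).comp_tendstoUniformlyOn_eventually hball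
      (fun z hz => closedBall_subset_closedBall (by linarith) hz) hconv

theorem tendsto_two_pi_I_div_natCast :
    Tendsto (fun n : ℕ => 2 * π * I / n) atTop (𝓝[≠] 0) := by
  refine tendsto_nhdsWithin_iff.mpr ⟨tendsto_const_div_atTop_nhds_zero_nat _, ?_⟩
  filter_upwards [eventually_gt_atTop 0] with n hn
  simp [hn.ne']

/-- Entire functions periodic with arbitrarily large integer period are dense
in the space of entire functions. -/
theorem periodic_functions_dense :
    ∀ g : ℂ → ℂ, Differentiable ℂ g → ∀ ε > (0 : ℝ), ∀ R > (0 : ℝ), ∀ n₀ : ℕ,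
      ∃ n : ℕ, n₀ < n ∧ ∃ f : ℂ → ℂ, Differentiable ℂ f ∧
        (∀ z : ℂ, f (z + n) = f z) ∧
        ∀ z : ℂ, ‖z‖ ≤ R → ‖f z - g z‖ < ε := by
  intro g hg ε hε R _ n₀
  have hclose := tendsto_two_pi_I_div_natCast.eventually <| Metric.tendstoUniformlyOn_iff.mp
    (hg.continuous.tendstoUniformlyOn_comp_expMulSubOneDiv R) ε hε
  obtain ⟨n, hn₀, hn⟩ := ((eventually_gt_atTop n₀).and hclose).exists
  have hperiod : (2 * π * I / n)⁻¹ * (2 * π * I) = n := by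
    field_simp [two_pi_I_ne_zero]
  refine ⟨n, hn₀, g ∘ expMulSubOneDiv (2 * π * I / n),
    hg.comp (differentiable_expMulSubOneDiv _), fun z => ?_, fun z hz => ?_⟩
  · have := periodic_expMulSubOneDiv (2 * π * I / n) z
    rw [hperiod] at this
    exact congrArg g this
  · rw [← dist_eq_norm, dist_comm]
    exact hn z (mem_closedBall_zero_iff.mpr hz)
end

section
/- There exists a family (A_{n,m})_{n,m ∈ ℕ} of pairwise disjoint subsets of ℕ, each having positive lower density, such that for any k ∈ A_{n,m} and k' ∈ A_{n',m'} one has k > m, and |k − k'| > m + m' whenever k ≠ k'. -/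
open Filter

open scoped Classical in
/-- A set `A ⊆ ℕ` has positive lower density. -/
noncomputable def PosLowerDensity (A : Set ℕ) : Prop :=
  0 < Filter.atTop.liminf (fun N : ℕ =>
    (((Finset.range (N + 1)).filter (fun k => k ∈ A)).card : ℝ) / N)

/-! The set with label `e` consists of the multiples of `2 ^ (e + 1)` lying in those dyadic blocks
`[2 ^ L, 2 ^ (L + 1))` whose exponent `L` has `2`-adic valuation exactly `e + 1`. The valuation
keeps distinct labels apart; since every such `L` is even, two blocks in use are separated by a
whole empty dyadic block, which is longer than `e + e'`, while inside one block the spacing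
`2 ^ (e + 1)` exceeds `2 * e`. The exponents of label `e` recur with period `2 ^ (e + 2)`, so the
set fills a fixed proportion of every long initial segment. The family is indexed by
`Nat.pair n m ≥ m`. -/

open scoped Classical in
theorem PosLowerDensity.of_eventually_le {A : Set ℕ} {c : ℝ} (hc : 0 < c)
    (h : ∀ᶠ N : ℕ in atTop, c * N ≤ ((Finset.range (N + 1)).filter (· ∈ A)).card) :
    PosLowerDensity A := by
  have hbdd : ∀ N : ℕ, (((Finset.range (N + 1)).filter (· ∈ A)).card : ℝ) / N ≤ 2 := by
    intro N
    rcases N.eq_zero_or_pos with rfl | hN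
    · simp
    have hcard : ((Finset.range (N + 1)).filter (· ∈ A)).card ≤ 2 * N :=
      (Finset.card_filter_le _ _).trans (by rw [Finset.card_range]; omega)
    rw [div_le_iff₀ (by positivity)]
    exact_mod_cast hcard
  refine hc.trans_le (le_liminf_of_le (isCoboundedUnder_ge_of_le atTop hbdd) ?_)
  filter_upwards [h, eventually_gt_atTop 0] with N hN hN0
  rwa [le_div_iff₀ (by exact_mod_cast hN0)]

theorem Nat.card_filter_two_pow_dvd_log_eq {a L : ℕ} (h : a ≤ L) :
    2 ^ (L - a) ≤ ((Finset.range (2 ^ (L + 1))).filter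
      (fun k => 2 ^ a ∣ k ∧ Nat.log 2 k = L)).card := by
  obtain ⟨b, rfl⟩ := Nat.exists_eq_add_of_le h
  have hIco : (Finset.Ico (2 ^ b) (2 ^ (b + 1))).card = 2 ^ b := by
    rw [Nat.card_Ico, pow_succ]; omega
  rw [Nat.add_sub_cancel_left, ← hIco]
  refine Finset.card_le_card_of_injOn (2 ^ a * ·) ?_ (fun _ _ _ _ => by simp)
  intro s hs
  simp only [Finset.coe_Ico, Set.mem_Ico] at hs
  have hlo : 2 ^ (a + b) ≤ 2 ^ a * s := by rw [pow_add]; gcongr; exact hs.1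
  have hhi : 2 ^ a * s < 2 ^ (a + b + 1) := by
    rw [add_assoc, pow_add]; gcongr; exact hs.2
  simp only [Finset.coe_filter, Finset.mem_range, Set.mem_ofPred_eq]
  exact ⟨hhi, dvd_mul_right _ _, Nat.log_eq_of_pow_le_of_lt_pow hlo hhi⟩

theorem Nat.add_two_pow_lt_of_log_lt_of_lt_log {a b n : ℕ} (ha : Nat.log 2 a < n)
    (hb : n < Nat.log 2 b) : a + 2 ^ n < b := by
  have h1 : a < 2 ^ n := Nat.lt_pow_of_log_lt one_lt_two ha
  have h2 : 2 ^ (n + 1) ≤ b := Nat.pow_le_of_le_log (by rintro rfl; simp at hb) hb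
  rw [pow_succ] at h2
  omega

theorem Int.le_abs_sub_of_dvd_of_ne {d a b : ℤ} (ha : d ∣ a) (hb : d ∣ b) (hab : a ≠ b) :
    d ≤ |a - b| :=
  Int.le_of_dvd (abs_pos.mpr (sub_ne_zero.mpr hab)) ((dvd_abs _ _).mpr (dvd_sub ha hb))

def blockExponent (e t : ℕ) : ℕ := 2 ^ (e + 1) * (2 * t + 1)

theorem padicValNat_blockExponent (e t : ℕ) : padicValNat 2 (blockExponent e t) = e + 1 := by
  rw [blockExponent, padicValNat.mul (by positivity) (by omega), padicValNat.prime_pow,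
    padicValNat.eq_zero_of_not_dvd (by omega), add_zero]

theorem two_dvd_blockExponent (e t : ℕ) : 2 ∣ blockExponent e t :=
  (dvd_pow_self 2 e.succ_ne_zero).mul_right _

theorem two_mul_add_two_le_blockExponent (e t : ℕ) : 2 * e + 2 ≤ blockExponent e t := by
  have : 2 * e + 2 ≤ 2 ^ (e + 1) := by rw [pow_succ]; have := e.lt_two_pow_self; omega
  exact this.trans (Nat.le_mul_of_pos_right _ (by omega))

theorem exists_blockExponent_le_lt {e ℓ : ℕ} (h : 2 ^ (e + 1) ≤ ℓ) :
    ∃ t, blockExponent e t ≤ ℓ ∧ ℓ < blockExponent e t + 2 ^ (e + 2) := by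
  obtain ⟨d, hd⟩ : ∃ d, 2 ^ (e + 1) = d := ⟨_, rfl⟩
  have hd0 : 0 < d := hd ▸ by positivity
  have hd2 : 2 ^ (e + 2) = 2 * d := by rw [← hd, pow_succ, mul_comm]
  rw [hd] at h
  refine ⟨(ℓ - d) / (2 * d), ?_⟩
  have h1 := Nat.div_mul_le_self (ℓ - d) (2 * d)
  have h2 := Nat.lt_div_mul_add (a := ℓ - d) (b := 2 * d) (by omega)
  have hL : blockExponent e ((ℓ - d) / (2 * d)) = (ℓ - d) / (2 * d) * (2 * d) + d := by
    rw [blockExponent, hd]; ring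
  rw [hL, hd2]
  omega

def blockSet (e : ℕ) : Set ℕ :=
  {k | 2 ^ (e + 1) ∣ k ∧ Nat.log 2 k ∈ Set.range (blockExponent e)}

theorem eq_of_mem_blockSet_of_log_eq {e e' k k' : ℕ} (hk : k ∈ blockSet e)
    (hk' : k' ∈ blockSet e') (h : Nat.log 2 k = Nat.log 2 k') : e = e' := by
  obtain ⟨-, t, ht⟩ := hk
  obtain ⟨-, t', ht'⟩ := hk'
  have := congrArg (padicValNat 2) (ht.trans (h.trans ht'.symm))
  simpa [padicValNat_blockExponent] using this

theorem disjoint_blockSet {e e' : ℕ} (h : e ≠ e') : Disjoint (blockSet e) (blockSet e') :=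
  Set.disjoint_left.mpr fun _ hk hk' => h (eq_of_mem_blockSet_of_log_eq hk hk' rfl)

theorem lt_of_mem_blockSet {e k : ℕ} (hk : k ∈ blockSet e) : e < k := by
  obtain ⟨-, t, ht⟩ := hk
  have := two_mul_add_two_le_blockExponent e t
  have := Nat.log_le_self 2 k
  omega

theorem add_add_lt_of_mem_blockSet_of_log_lt {e e' k k' : ℕ} (hk : k ∈ blockSet e)
    (hk' : k' ∈ blockSet e') (h : Nat.log 2 k < Nat.log 2 k') : k + (e + e') < k' := by
  obtain ⟨-, t, ht⟩ := hk
  obtain ⟨-, t', ht'⟩ := hk'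
  have := two_mul_add_two_le_blockExponent e t
  have := two_mul_add_two_le_blockExponent e' t'
  have := two_dvd_blockExponent e t
  have := two_dvd_blockExponent e' t'
  -- both exponents are even, so the block `[2 ^ (log k' - 1), 2 ^ log k')` separates `k`, `k'`
  have := Nat.add_two_pow_lt_of_log_lt_of_lt_log (a := k) (b := k') (n := Nat.log 2 k' - 1)
    (by omega) (by omega)
  have := (Nat.log 2 k' - 1).lt_two_pow_self
  omega

theorem lt_abs_sub_of_mem_blockSet {e e' k k' : ℕ} (hk : k ∈ blockSet e)
    (hk' : k' ∈ blockSet e') (hne : k ≠ k') : (e + e' : ℤ) < |(k : ℤ) - k'| := by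
  rcases lt_trichotomy (Nat.log 2 k) (Nat.log 2 k') with h | h | h
  · have := add_add_lt_of_mem_blockSet_of_log_lt hk hk' h
    rw [abs_sub_comm, abs_of_pos (by omega)]
    omega
  · obtain rfl := eq_of_mem_blockSet_of_log_eq hk hk' h
    have hdvd : ((2 ^ (e + 1) : ℕ) : ℤ) ≤ |(k : ℤ) - k'| :=
      Int.le_abs_sub_of_dvd_of_ne (Int.natCast_dvd_natCast.mpr hk.1)
        (Int.natCast_dvd_natCast.mpr hk'.1) (by exact_mod_cast hne)
    have : e + e < 2 ^ (e + 1) := by rw [pow_succ]; have := e.lt_two_pow_self; omega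
    omega
  · have := add_add_lt_of_mem_blockSet_of_log_lt hk' hk h
    rw [abs_of_pos (by omega)]
    omega

open scoped Classical in
theorem lt_mul_card_filter_blockSet {e N : ℕ} (hN : 2 ^ (2 ^ (e + 1) + 1) ≤ N) :
    N < 2 ^ (2 ^ (e + 2) + e + 2) * ((Finset.range (N + 1)).filter (· ∈ blockSet e)).card := by
  have hN0 : N ≠ 0 := ((Nat.two_pow_pos _).trans_le hN).ne'
  have hℓ : 2 ^ (e + 1) + 1 ≤ Nat.log 2 N := Nat.le_log_of_pow_le one_lt_two hN
  obtain ⟨t, hLℓ, hℓL⟩ :=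
    exists_blockExponent_le_lt (e := e) (ℓ := Nat.log 2 N - 1) (by omega)
  set L := blockExponent e t
  have heL : e + 1 ≤ L := by have := two_mul_add_two_le_blockExponent e t; omega
  have hsub : (Finset.range (2 ^ (L + 1))).filter
      (fun k => 2 ^ (e + 1) ∣ k ∧ Nat.log 2 k = L) ⊆
        (Finset.range (N + 1)).filter (· ∈ blockSet e) := by
    have : 2 ^ (L + 1) ≤ N := (Nat.pow_le_pow_right two_pos (by omega)).trans
      (Nat.pow_log_le_self 2 hN0)
    intro k
    simp only [Finset.mem_filter, Finset.mem_range]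
    exact fun ⟨hk, hdvd, hlog⟩ => ⟨by omega, hdvd, t, hlog.symm⟩
  calc N < 2 ^ (Nat.log 2 N + 1) := Nat.lt_pow_succ_log_self one_lt_two N
    _ ≤ 2 ^ (2 ^ (e + 2) + e + 2) * 2 ^ (L - (e + 1)) := by
      rw [← pow_add]; exact Nat.pow_le_pow_right two_pos (by omega)
    _ ≤ _ := by
      gcongr
      exact (Nat.card_filter_two_pow_dvd_log_eq heL).trans (Finset.card_le_card hsub)

theorem posLowerDensity_blockSet (e : ℕ) : PosLowerDensity (blockSet e) := by
  refine PosLowerDensity.of_eventually_le (c := (2 ^ (2 ^ (e + 2) + e + 2) : ℝ)⁻¹)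
    (by positivity) ?_
  filter_upwards [eventually_ge_atTop (2 ^ (2 ^ (e + 1) + 1))] with N hN
  rw [inv_mul_le_iff₀ (by positivity)]
  exact_mod_cast (lt_mul_card_filter_blockSet hN).le

/-- There is a family of pairwise disjoint subsets of `ℕ`, each of positive
lower density, with the separation properties of Bonilla–Grosse-Erdmann. -/
theorem exists_disjoint_posLowerDensity_family :
    ∃ A : ℕ → ℕ → Set ℕ,
      (∀ n m, PosLowerDensity (A n m)) ∧
      (∀ n m n' m', (n, m) ≠ (n', m') → A n m ∩ A n' m' = ∅) ∧
      (∀ n m n' m' : ℕ, ∀ k ∈ A n m, ∀ k' ∈ A n' m',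
        m < k ∧ (k ≠ k' → (m + m' : ℤ) < |(k : ℤ) - (k' : ℤ)|)) := by
  refine ⟨fun n m => blockSet (Nat.pair n m), fun n m => posLowerDensity_blockSet _, ?_, ?_⟩
  · intro n m n' m' hne
    refine Set.disjoint_iff_inter_eq_empty.mp (disjoint_blockSet fun h => hne ?_)
    simpa using Nat.pair_eq_pair.mp h
  · intro n m n' m' k hk k' hk'
    have hm := Nat.right_le_pair n m
    have hm' := Nat.right_le_pair n' m'
    refine ⟨hm.trans_lt (lt_of_mem_blockSet hk), fun hne => ?_⟩
    have := lt_abs_sub_of_mem_blockSet hk hk' hne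
    omega
end
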